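/- For every nonzero real number α with |α| ≤ 2^{m+ℓ−1}, the error when approximating T(α) by P̃(α) satisfies |T(α) − P̃(α)| ≤ (r/2^{2(m+ℓ)})·(π²/12). -/

import Mathlib

/-- The first approximation `T(α)` of `P(α)` in the analysis of Shor's
order-finding algorithm, for order `r` and exponent length `m + ℓ`. -/
noncomputable def ShorT (r m ℓ : ℕ) (α : ℝ) : ℝ :=
  (r : ℝ) / 2 ^ (2 * (m + ℓ)) *
    ((1 - Real.cos (2 * Real.pi * α / r)) /
      (1 - Real.cos (2 * Real.pi * α / 2 ^ (m + ℓ))))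

/-- The second approximation `P̃(α)` of `P(α)`. -/
noncomputable def ShorPtilde (r m ℓ : ℕ) (α : ℝ) : ℝ :=
  (r : ℝ) / 2 ^ (2 * (m + ℓ)) *
    (2 * (1 - Real.cos (2 * Real.pi * α / r)) /
      (2 * Real.pi * α / 2 ^ (m + ℓ)) ^ 2)

lemma aux_sub_cube_le_sin {x : ℝ} (hx : 0 ≤ x) : x - x ^ 3 / 6 ≤ Real.sin x := by
  have h : MonotoneOn (fun y : ℝ => Real.sin y - y + y ^ 3 / 6) (Set.Ici 0) := by
    apply monotoneOn_of_deriv_nonneg (convex_Ici 0)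
    · fun_prop
    · fun_prop
    · intro y hy
      have h1 : HasDerivAt (fun y : ℝ => Real.sin y - y + y ^ 3 / 6)
          (Real.cos y - 1 + 3 * y ^ 2 / 6) y := by
        have := ((Real.hasDerivAt_sin y).sub (hasDerivAt_id y)).add
          (((hasDerivAt_pow 3 y)).div_const 6)
        simp at this; exact this
      rw [h1.deriv]
      have := Real.one_sub_sq_div_two_le_cos (x := y)
      linarith
  have h0 := h (Set.self_mem_Ici) (Set.mem_Ici.2 hx) hx
  simp at h0
  linarith

lemma aux_cos_half (y : ℝ) : Real.cos y = 1 - 2 * Real.sin (y / 2) ^ 2 := by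
  have h2 : Real.cos (2 * (y / 2)) = Real.cos (y / 2) ^ 2 - Real.sin (y / 2) ^ 2 :=
    Real.cos_two_mul' _
  have h3 := Real.sin_sq_add_cos_sq (y / 2)
  rw [show 2 * (y / 2) = y by ring] at h2
  linarith

lemma aux_key {θ : ℝ} (h0 : 0 < θ) (hπ : θ ≤ Real.pi) :
    θ ^ 2 - 2 * (1 - Real.cos θ) ≤ Real.pi ^ 2 / 24 * (θ ^ 2 * (1 - Real.cos θ)) := by
  set x := θ / 2 with hx
  have hx0 : 0 < x := by positivity
  have hxπ : x ≤ Real.pi / 2 := by rw [hx]; linarith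
  set s := Real.sin x with hs
  have hcos : Real.cos θ = 1 - 2 * s ^ 2 := aux_cos_half θ
  have hsle : s ≤ x := Real.sin_le hx0.le
  have hsge : 2 / Real.pi * x ≤ s := Real.mul_le_sin hx0.le hxπ
  have hcube : x - x ^ 3 / 6 ≤ s := aux_sub_cube_le_sin hx0.le
  have hθ : θ = 2 * x := by rw [hx]; ring
  have hπpos : 0 < Real.pi := Real.pi_pos
  have h1 : x ^ 2 - s ^ 2 ≤ x ^ 4 / 3 := by nlinarith [sq_nonneg x, sq_nonneg s]
  have h2 : x ^ 4 / 3 ≤ Real.pi ^ 2 / 12 * (x ^ 2 * s ^ 2) := by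
    have hq : (2 / Real.pi * x) ^ 2 ≤ s ^ 2 := by
      have h2x : 0 ≤ 2 / Real.pi * x := by positivity
      nlinarith
    have hmul := mul_le_mul_of_nonneg_left hq
      (by positivity : (0:ℝ) ≤ Real.pi ^ 2 / 12 * x ^ 2)
    have heq : Real.pi ^ 2 / 12 * x ^ 2 * (2 / Real.pi * x) ^ 2 = x ^ 4 / 3 := by
      field_simp; ring
    rw [heq] at hmul
    linarith [hmul]
  rw [hcos, hθ]
  nlinarith [h1, h2]

lemma aux_key' {θ : ℝ} (h0 : θ ≠ 0) (hπ : |θ| ≤ Real.pi) :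
    θ ^ 2 - 2 * (1 - Real.cos θ) ≤ Real.pi ^ 2 / 24 * (θ ^ 2 * (1 - Real.cos θ)) := by
  have h := aux_key (θ := |θ|) (abs_pos.2 h0) hπ
  rwa [Real.cos_abs, sq_abs] at h

lemma aux_cos_lt_one {θ : ℝ} (h0 : θ ≠ 0) (hπ : |θ| ≤ Real.pi) : Real.cos θ < 1 := by
  have hpos : 0 < |θ| := abs_pos.2 h0
  have hs : 2 / Real.pi * (|θ| / 2) ≤ Real.sin (|θ| / 2) :=
    Real.mul_le_sin (by positivity) (by linarith)
  have hπpos : 0 < Real.pi := Real.pi_pos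
  have hspos : 0 < Real.sin (|θ| / 2) := lt_of_lt_of_le (by positivity) hs
  have := aux_cos_half |θ|
  rw [← Real.cos_abs θ, this]
  nlinarith

theorem stmt_1 (r m ℓ : ℕ) (hr : 2 ≤ r) (hm : 1 ≤ m) (hℓ : 1 ≤ ℓ) (hrm : r < 2 ^ m)
    (α : ℝ) (hα : α ≠ 0) (hα' : |α| ≤ 2 ^ (m + ℓ - 1)) :
    |ShorT r m ℓ α - ShorPtilde r m ℓ α| ≤
      (r : ℝ) / 2 ^ (2 * (m + ℓ)) * (Real.pi ^ 2 / 12) := by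
  have hπpos : 0 < Real.pi := Real.pi_pos
  set N := m + ℓ with hN
  set θ : ℝ := 2 * Real.pi * α / 2 ^ N with hθdef
  have h2N : (0:ℝ) < 2 ^ N := by positivity
  have hθ0 : θ ≠ 0 := by
    rw [hθdef]
    have : 2 * Real.pi * α ≠ 0 := by
      apply mul_ne_zero (mul_ne_zero two_ne_zero (ne_of_gt hπpos)) hα
    exact div_ne_zero this (ne_of_gt h2N)
  have hθπ : |θ| ≤ Real.pi := by
    have hpow : (2:ℝ) ^ N = 2 ^ (N - 1) * 2 := by
      rw [← pow_succ]
      congr 1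
      omega
    rw [hθdef, abs_div, abs_of_pos h2N, div_le_iff₀ h2N, abs_mul,
      abs_of_pos (by positivity : (0:ℝ) < 2 * Real.pi), hpow]
    calc 2 * Real.pi * |α| ≤ 2 * Real.pi * 2 ^ (N - 1) := by
          apply mul_le_mul_of_nonneg_left _ (by positivity)
          exact le_trans hα' (by norm_num)
      _ = Real.pi * (2 ^ (N - 1) * 2) := by ring
  have hD : 0 < 1 - Real.cos θ := by linarith [aux_cos_lt_one hθ0 hθπ]
  have hS : 0 < θ ^ 2 := by positivity
  set A : ℝ := 1 - Real.cos (2 * Real.pi * α / r) with hA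
  have hA0 : 0 ≤ A := by
    rw [hA]; have := Real.cos_le_one (2 * Real.pi * α / r); linarith
  have hA2 : A ≤ 2 := by
    rw [hA]; have := Real.neg_one_le_cos (2 * Real.pi * α / r); linarith
  have hc0 : (0:ℝ) ≤ (r : ℝ) / 2 ^ (2 * N) := by positivity
  have hnum0 : 0 ≤ θ ^ 2 - 2 * (1 - Real.cos θ) := by
    have := Real.one_sub_sq_div_two_le_cos (x := θ); linarith
  have hkey := aux_key' hθ0 hθπ
  have hdiff : ShorT r m ℓ α - ShorPtilde r m ℓ α =
      (r : ℝ) / 2 ^ (2 * N) *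
        (A * (θ ^ 2 - 2 * (1 - Real.cos θ)) / ((1 - Real.cos θ) * θ ^ 2)) := by
    rw [ShorT, ShorPtilde, ← hN, ← hθdef, ← hA]
    field_simp
  rw [hdiff, abs_of_nonneg (by positivity)]
  apply mul_le_mul_of_nonneg_left _ hc0
  rw [div_le_iff₀ (by positivity)]
  calc A * (θ ^ 2 - 2 * (1 - Real.cos θ))
      ≤ 2 * (Real.pi ^ 2 / 24 * (θ ^ 2 * (1 - Real.cos θ))) := by
        apply mul_le_mul hA2 hkey hnum0 (by norm_num)
    _ = Real.pi ^ 2 / 12 * ((1 - Real.cos θ) * θ ^ 2) := by ring
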